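/- If a sequence of ordered structures M_0 ⊆ M_1 ⊆ M_2 ⊆ ... forms a Π^in_α-elementary chain (each inclusion preserves truth of all infinitary Π_α formulas with parameters, in both directions appropriate to Π_α-elementarity), M is the union of the chain, and φ is an infinitary Π_{α+2} sentence true in every M_i, then φ is true in M. -/

import Mathlib

/-- Infinitary formulas of L_{ω₁ω} for colored linear orders: atomic formulas for the
order, equality and colors, negation, finite and countable conjunctions and
disjunctions, and quantifiers.  Variables are indexed by ℕ. -/
inductive InfFormula : Type
  | le (i j : ℕ)
  | eq (i j : ℕ)
  | colorIs (i : ℕ) (n : ℕ)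
  | not (φ : InfFormula)
  | and (φ ψ : InfFormula)
  | or (φ ψ : InfFormula)
  | iConj (φs : ℕ → InfFormula)
  | iDisj (φs : ℕ → InfFormula)
  | all (i : ℕ) (φ : InfFormula)
  | ex (i : ℕ) (φ : InfFormula)

/-- Satisfaction of an infinitary formula in a colored linear order under a partial
valuation (so that sentences have the right semantics also in empty structures). -/
def InfFormula.Sat {M : Type} [LinearOrder M] (c : M → ℕ) :
    InfFormula → (ℕ → Option M) → Prop
  | .le i j, v => ∃ a b : M, v i = some a ∧ v j = some b ∧ a ≤ b
  | .eq i j, v => ∃ a b : M, v i = some a ∧ v j = some b ∧ a = b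
  | .colorIs i n, v => ∃ a : M, v i = some a ∧ c a = n
  | .not φ, v => ¬ InfFormula.Sat c φ v
  | .and φ ψ, v => InfFormula.Sat c φ v ∧ InfFormula.Sat c ψ v
  | .or φ ψ, v => InfFormula.Sat c φ v ∨ InfFormula.Sat c ψ v
  | .iConj φs, v => ∀ n : ℕ, InfFormula.Sat c (φs n) v
  | .iDisj φs, v => ∃ n : ℕ, InfFormula.Sat c (φs n) v
  | .all i φ, v => ∀ a : M, InfFormula.Sat c φ (Function.update v i (some a))
  | .ex i φ, v => ∃ a : M, InfFormula.Sat c φ (Function.update v i (some a))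

/-- Finitary quantifier-free formulas. -/
inductive InfFormula.IsQF : InfFormula → Prop
  | le (i j : ℕ) : IsQF (.le i j)
  | eq (i j : ℕ) : IsQF (.eq i j)
  | colorIs (i n : ℕ) : IsQF (.colorIs i n)
  | not {φ} : IsQF φ → IsQF (.not φ)
  | and {φ ψ} : IsQF φ → IsQF ψ → IsQF (.and φ ψ)
  | or {φ ψ} : IsQF φ → IsQF ψ → IsQF (.or φ ψ)

mutual
  /-- Σ_α infinitary formulas: Σ₀ formulas are (finitary) quantifier-free; for α > 0 a
  Σ_α formula is a countable disjunction of existentially quantified Π_β formulas with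
  β < α. -/
  inductive InfFormula.IsSigma : Ordinal → InfFormula → Prop
    | of_qf {φ} : InfFormula.IsQF φ → InfFormula.IsSigma 0 φ
    | disj {α : Ordinal} {φs : ℕ → InfFormula} {βs : ℕ → Ordinal}
        (hβ : ∀ n, βs n < α) (h : ∀ n, InfFormula.IsExPi (βs n) (φs n)) :
        InfFormula.IsSigma α (.iDisj φs)

  /-- Π_β formulas prefixed by finitely many existential quantifiers. -/
  inductive InfFormula.IsExPi : Ordinal → InfFormula → Prop
    | of_pi {α φ} : InfFormula.IsPi α φ → InfFormula.IsExPi α φ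
    | ex {α : Ordinal} {i : ℕ} {φ} :
        InfFormula.IsExPi α φ → InfFormula.IsExPi α (.ex i φ)

  /-- Π_α infinitary formulas: Π₀ formulas are (finitary) quantifier-free; for α > 0 a
  Π_α formula is a countable conjunction of universally quantified Σ_β formulas with
  β < α. -/
  inductive InfFormula.IsPi : Ordinal → InfFormula → Prop
    | of_qf {φ} : InfFormula.IsQF φ → InfFormula.IsPi 0 φ
    | conj {α : Ordinal} {φs : ℕ → InfFormula} {βs : ℕ → Ordinal}
        (hβ : ∀ n, βs n < α) (h : ∀ n, InfFormula.IsAllSigma (βs n) (φs n)) :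
        InfFormula.IsPi α (.iConj φs)

  /-- Σ_β formulas prefixed by finitely many universal quantifiers. -/
  inductive InfFormula.IsAllSigma : Ordinal → InfFormula → Prop
    | of_sigma {α φ} : InfFormula.IsSigma α φ → InfFormula.IsAllSigma α φ
    | all {α : Ordinal} {i : ℕ} {φ} :
        InfFormula.IsAllSigma α φ → InfFormula.IsAllSigma α (.all i φ)
end

/-- The free variables of an infinitary formula. -/
def InfFormula.freeVars : InfFormula → Set ℕ
  | .le i j => {i, j}
  | .eq i j => {i, j}
  | .colorIs i _ => {i}
  | .not φ => φ.freeVars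
  | .and φ ψ => φ.freeVars ∪ ψ.freeVars
  | .or φ ψ => φ.freeVars ∪ ψ.freeVars
  | .iConj φs => ⋃ n, (φs n).freeVars
  | .iDisj φs => ⋃ n, (φs n).freeVars
  | .all i φ => φ.freeVars \ {i}
  | .ex i φ => φ.freeVars \ {i}


section ChainAux

lemma omap_update {X Y : Type} (f : X → Y) (v : ℕ → Option X) (i : ℕ) (a : X) :
    (fun n => ((Function.update v i (some a)) n).map f)
      = Function.update (fun n => (v n).map f) i (some (f a)) := by
  funext n
  rcases eq_or_ne n i with rfl | h
  · simp
  · simp [Function.update_of_ne h]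

lemma qf_sat_iff {N₁ N₂ : Type} [LinearOrder N₁] [LinearOrder N₂]
    (c₁ : N₁ → ℕ) (c₂ : N₂ → ℕ) (f : N₁ → N₂)
    (hle : ∀ a b : N₁, f a ≤ f b ↔ a ≤ b) (hinj : Function.Injective f)
    (hc : ∀ a, c₂ (f a) = c₁ a)
    {φ : InfFormula} (h : φ.IsQF) (v : ℕ → Option N₁) :
    InfFormula.Sat c₁ φ v ↔ InfFormula.Sat c₂ φ (fun n => (v n).map f) := by
  induction h with
  | le i j =>
    simp only [InfFormula.Sat, Option.map_eq_some_iff]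
    constructor
    · rintro ⟨a, b, ha, hb, hab⟩
      exact ⟨f a, f b, ⟨a, ha, rfl⟩, ⟨b, hb, rfl⟩, (hle a b).2 hab⟩
    · rintro ⟨_, _, ⟨a, ha, rfl⟩, ⟨b, hb, rfl⟩, hab⟩
      exact ⟨a, b, ha, hb, (hle a b).1 hab⟩
  | eq i j =>
    simp only [InfFormula.Sat, Option.map_eq_some_iff]
    constructor
    · rintro ⟨a, b, ha, hb, rfl⟩
      exact ⟨f a, f a, ⟨a, ha, rfl⟩, ⟨a, hb, rfl⟩, rfl⟩
    · rintro ⟨_, _, ⟨a, ha, rfl⟩, ⟨b, hb, rfl⟩, hab⟩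
      exact ⟨a, b, ha, hb, hinj hab⟩
  | colorIs i n =>
    simp only [InfFormula.Sat, Option.map_eq_some_iff]
    constructor
    · rintro ⟨a, ha, hca⟩
      exact ⟨f a, ⟨a, ha, rfl⟩, by rw [hc a, hca]⟩
    · rintro ⟨_, ⟨a, ha, rfl⟩, hca⟩
      exact ⟨a, ha, by rw [← hc a, hca]⟩
  | not h ih => simp only [InfFormula.Sat]; rw [ih]
  | and h1 h2 ih1 ih2 => simp only [InfFormula.Sat]; rw [ih1, ih2]
  | or h1 h2 ih1 ih2 => simp only [InfFormula.Sat]; rw [ih1, ih2]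

lemma omap_inclusion_self {M : Type} {s : Set M} (h : s ⊆ s) (v : ℕ → Option ↥s) :
    (fun n => (v n).map (Set.inclusion h)) = v := by
  have hid : Set.inclusion h = id := funext fun a => Subtype.ext rfl
  simp [hid]

lemma InfFormula.isPi_elim {γ : Ordinal} {φ : InfFormula} (h : φ.IsPi γ) (hγ : γ ≠ 0) :
    ∃ (φs : ℕ → InfFormula) (βs : ℕ → Ordinal), φ = .iConj φs ∧ (∀ n, βs n < γ) ∧
      ∀ n, (φs n).IsAllSigma (βs n) := by
  cases h with
  | of_qf hq => exact absurd rfl hγ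
  | conj hβ hh => exact ⟨_, _, rfl, hβ, hh⟩

lemma chain_main {M : Type} [LinearOrder M] (cM : M → ℕ)
    (α : Ordinal) (A : ℕ → Set M) (hA : Monotone A) (hU : (⋃ i, A i) = Set.univ)
    (helem : ∀ i j : ℕ, ∀ hij : i ≤ j, ∀ φ : InfFormula, φ.IsPi α →
      ∀ v : ℕ → Option ↥(A i),
        InfFormula.Sat (fun x : ↥(A i) => cM x.val) φ v ↔
          InfFormula.Sat (fun x : ↥(A j) => cM x.val) φ
            (fun n => (v n).map (Set.inclusion (hA hij)))) :
    ∀ γ : Ordinal, γ ≤ α + 1 → ∀ φ : InfFormula, φ.IsAllSigma γ →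
      ∀ (j : ℕ) (v : ℕ → Option ↥(A j)),
        (∀ k (hjk : j ≤ k), InfFormula.Sat (fun x : ↥(A k) => cM x.val) φ
            (fun n => (v n).map (Set.inclusion (hA hjk)))) →
        InfFormula.Sat cM φ (fun n => (v n).map Subtype.val) := by
  intro γ
  induction γ using Ordinal.induction with
  | h γ IH =>
  intro hγ
  -- Π formulas of rank < γ (and ≤ α) go up from a chain member to M
  have PI : ∀ δ : Ordinal, δ ≤ α → δ < γ → ∀ ψ : InfFormula, ψ.IsPi δ →
      ∀ (j : ℕ) (v : ℕ → Option ↥(A j)),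
        InfFormula.Sat (fun x : ↥(A j) => cM x.val) ψ v →
        InfFormula.Sat cM ψ (fun n => (v n).map Subtype.val) := by
    intro δ hδα hδγ ψ hψ j v hv
    cases hψ with
    | of_qf hq =>
      exact (qf_sat_iff _ cM Subtype.val (fun a b => Subtype.coe_le_coe)
        Subtype.val_injective (fun _ => rfl) hq v).mp hv
    | @conj _ φs βs hβ h =>
      intro n
      have hπα : InfFormula.IsPi α (.iConj φs) :=
        InfFormula.IsPi.conj (fun m => lt_of_lt_of_le (hβ m) hδα) h
      refine IH (βs n) (lt_trans (hβ n) hδγ)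
        (((hβ n).le.trans hδα).trans (le_self_add (a := α) (b := 1))) (φs n) (h n) j v ?_
      intro k hjk
      exact ((helem j k hjk _ hπα v).mp hv) n
  -- ∃-prefixed Π formulas of rank < γ go up from a chain member to M
  have EXPI : ∀ δ : Ordinal, δ ≤ α → δ < γ → ∀ ψ : InfFormula, ψ.IsExPi δ →
      ∀ (j : ℕ) (v : ℕ → Option ↥(A j)),
        InfFormula.Sat (fun x : ↥(A j) => cM x.val) ψ v →
        InfFormula.Sat cM ψ (fun n => (v n).map Subtype.val) := by
    intro δ h1 h2 ψ
    induction ψ with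
    | ex i ψ0 ih =>
      intro hψ j v hv
      cases hψ with
      | of_pi hpi => exact PI δ h1 h2 _ hpi j v hv
      | ex hψ0 =>
        obtain ⟨a, ha⟩ := hv
        refine ⟨a.val, ?_⟩
        have hrec := ih hψ0 j (Function.update v i (some a)) ha
        rwa [omap_update] at hrec
    | le i j0 =>
      intro hψ j v hv
      cases hψ with
      | of_pi hpi => exact PI δ h1 h2 _ hpi j v hv
    | eq i j0 =>
      intro hψ j v hv
      cases hψ with
      | of_pi hpi => exact PI δ h1 h2 _ hpi j v hv
    | colorIs i n0 =>
      intro hψ j v hv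
      cases hψ with
      | of_pi hpi => exact PI δ h1 h2 _ hpi j v hv
    | not ψ0 ih =>
      intro hψ j v hv
      cases hψ with
      | of_pi hpi => exact PI δ h1 h2 _ hpi j v hv
    | and ψ1 ψ2 ih1 ih2 =>
      intro hψ j v hv
      cases hψ with
      | of_pi hpi => exact PI δ h1 h2 _ hpi j v hv
    | or ψ1 ψ2 ih1 ih2 =>
      intro hψ j v hv
      cases hψ with
      | of_pi hpi => exact PI δ h1 h2 _ hpi j v hv
    | iConj ψs ih =>
      intro hψ j v hv
      cases hψ with
      | of_pi hpi => exact PI δ h1 h2 _ hpi j v hv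
    | iDisj ψs ih =>
      intro hψ j v hv
      cases hψ with
      | of_pi hpi => exact PI δ h1 h2 _ hpi j v hv
    | all i ψ0 ih =>
      intro hψ j v hv
      cases hψ with
      | of_pi hpi => exact PI δ h1 h2 _ hpi j v hv
  intro φ
  induction φ with
  | all i ψ ih =>
    intro hφ j v hv
    have hψ : ψ.IsAllSigma γ := by
      cases hφ with
      | of_sigma hs => cases hs with | of_qf hq => cases hq
      | all h => exact h
    intro a
    have ha : a ∈ ⋃ i, A i := hU ▸ Set.mem_univ a
    obtain ⟨k₀, hk₀⟩ := Set.mem_iUnion.mp ha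
    have hjk : j ≤ max j k₀ := le_max_left _ _
    have hak : a ∈ A (max j k₀) := hA (le_max_right j k₀) hk₀
    set k := max j k₀ with hk
    set v' : ℕ → Option ↥(A k) :=
      Function.update (fun n => (v n).map (Set.inclusion (hA hjk))) i (some ⟨a, hak⟩)
      with hv'
    have main := ih hψ k v' ?_
    · have heq : (fun n => (v' n).map Subtype.val)
          = Function.update (fun n => (v n).map Subtype.val) i (some a) := by
        funext n
        rcases eq_or_ne n i with rfl | h
        · simp [hv']
        · simp [hv', Function.update_of_ne h, Option.map_map, Function.comp]
      rw [heq] at main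
      exact main
    · intro l hkl
      have h2 := hv l (hjk.trans hkl)
      have h3 := h2 (Set.inclusion (hA hkl) ⟨a, hak⟩)
      have heq : (fun n => (v' n).map (Set.inclusion (hA hkl)))
          = Function.update (fun n => (v n).map (Set.inclusion (hA (hjk.trans hkl)))) i
              (some (Set.inclusion (hA hkl) ⟨a, hak⟩)) := by
        funext n
        rcases eq_or_ne n i with rfl | h
        · simp [hv']
        · simp [hv', Function.update_of_ne h, Option.map_map, Function.comp,
            Set.inclusion_inclusion]
      rw [heq]
      exact h3
  | le i0 j0 =>
    intro hφ j v hv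
    have hv0 := hv j le_rfl
    rw [omap_inclusion_self] at hv0
    cases hφ with
    | of_sigma hs =>
      cases hs with
      | of_qf hq =>
        exact (qf_sat_iff _ cM Subtype.val (fun a b => Subtype.coe_le_coe)
          Subtype.val_injective (fun _ => rfl) hq v).mp hv0
  | eq i0 j0 =>
    intro hφ j v hv
    have hv0 := hv j le_rfl
    rw [omap_inclusion_self] at hv0
    cases hφ with
    | of_sigma hs =>
      cases hs with
      | of_qf hq =>
        exact (qf_sat_iff _ cM Subtype.val (fun a b => Subtype.coe_le_coe)
          Subtype.val_injective (fun _ => rfl) hq v).mp hv0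
  | colorIs i0 n0 =>
    intro hφ j v hv
    have hv0 := hv j le_rfl
    rw [omap_inclusion_self] at hv0
    cases hφ with
    | of_sigma hs =>
      cases hs with
      | of_qf hq =>
        exact (qf_sat_iff _ cM Subtype.val (fun a b => Subtype.coe_le_coe)
          Subtype.val_injective (fun _ => rfl) hq v).mp hv0
  | not ψ0 ih =>
    intro hφ j v hv
    have hv0 := hv j le_rfl
    rw [omap_inclusion_self] at hv0
    cases hφ with
    | of_sigma hs =>
      cases hs with
      | of_qf hq =>
        exact (qf_sat_iff _ cM Subtype.val (fun a b => Subtype.coe_le_coe)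
          Subtype.val_injective (fun _ => rfl) hq v).mp hv0
  | and ψ1 ψ2 ih1 ih2 =>
    intro hφ j v hv
    have hv0 := hv j le_rfl
    rw [omap_inclusion_self] at hv0
    cases hφ with
    | of_sigma hs =>
      cases hs with
      | of_qf hq =>
        exact (qf_sat_iff _ cM Subtype.val (fun a b => Subtype.coe_le_coe)
          Subtype.val_injective (fun _ => rfl) hq v).mp hv0
  | or ψ1 ψ2 ih1 ih2 =>
    intro hφ j v hv
    have hv0 := hv j le_rfl
    rw [omap_inclusion_self] at hv0
    cases hφ with
    | of_sigma hs =>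
      cases hs with
      | of_qf hq =>
        exact (qf_sat_iff _ cM Subtype.val (fun a b => Subtype.coe_le_coe)
          Subtype.val_injective (fun _ => rfl) hq v).mp hv0
  | iConj ψs ih =>
    intro hφ j v hv
    cases hφ with
    | of_sigma hs =>
      cases hs with
      | of_qf hq => cases hq
  | iDisj ψs ih =>
    intro hφ j v hv
    have hv0 := hv j le_rfl
    rw [omap_inclusion_self] at hv0
    cases hφ with
    | of_sigma hs =>
      cases hs with
      | of_qf hq => cases hq
      | @disj _ _ βs hβ hh =>
        obtain ⟨n, hn⟩ := hv0
        have hβα : βs n ≤ α := Order.lt_add_one_iff.mp ((hβ n).trans_le hγ)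
        exact ⟨n, EXPI (βs n) hβα (hβ n) _ (hh n) j v hn⟩
  | ex i0 ψ0 ih =>
    intro hφ j v hv
    cases hφ with
    | of_sigma hs =>
      cases hs with
      | of_qf hq => cases hq

end ChainAux

/-- If M₀ ⊆ M₁ ⊆ ... is a Π_α-elementary chain of (colored) ordered
structures with union M, then any infinitary Π_{α+2} sentence true in every Mᵢ is true
in M. -/
theorem pi_sentence_of_chain {M : Type} [LinearOrder M] (cM : M → ℕ)
    (α : Ordinal) (A : ℕ → Set M) (hA : Monotone A) (hU : (⋃ i, A i) = Set.univ)
    (helem : ∀ i j : ℕ, ∀ hij : i ≤ j, ∀ φ : InfFormula, φ.IsPi α →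
      ∀ v : ℕ → Option ↥(A i),
        InfFormula.Sat (fun x : ↥(A i) => cM x.val) φ v ↔
          InfFormula.Sat (fun x : ↥(A j) => cM x.val) φ
            (fun n => (v n).map (Set.inclusion (hA hij))))
    (φ : InfFormula) (hφ : φ.IsPi (α + 2)) (hsent : φ.freeVars = ∅)
    (htrue : ∀ i : ℕ,
      InfFormula.Sat (fun x : ↥(A i) => cM x.val) φ (fun _ => none)) :
    InfFormula.Sat cM φ (fun _ => none) := by
  have hne : (α + 2 : Ordinal) ≠ 0 := by
    intro h0
    have h2 : (2 : Ordinal) ≤ α + 2 := le_add_self (a := 2) (b := α)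
    rw [h0] at h2
    exact absurd (le_antisymm h2 (zero_le (a := (2 : Ordinal)))) two_ne_zero
  obtain ⟨φs, βs, rfl, hβ, hAS⟩ := InfFormula.isPi_elim hφ hne
  intro n
  have hβ' : βs n ≤ α + 1 := by
    have : βs n < (α + 1) + 1 := by
      have h21 : (α + 2 : Ordinal) = (α + 1) + 1 := by rw [add_assoc]; norm_num
      rw [← h21]; exact hβ n
    exact Order.lt_add_one_iff.mp this
  have := chain_main cM α A hA hU helem (βs n) hβ' (φs n) (hAS n) 0 (fun _ => none)
    (fun k _ => htrue k n)
  exact this
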